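/- For integers i, j ≥ 1, define D_{ij} := g_{ij} − (5/12 + (i−j)/8), where g_{ij} = +∞ if n := 5i − j < 0 and g_{ij} = (⌊n/7⌋ + n̄)/4 if n ≥ 0 (with n̄ the least nonnegative residue of n modulo 7). Then: (a) D_{ij} > 7/6 whenever max(i, j) > 27; and (b) the only negative entries of D are D_{3,1} = −1/6 and D_{2,3} = −1/24. -/
import Mathlib


/-!
STATEMENT 15: For `i, j ≥ 1` put `n = 5i − j` and `D_{ij} := g_{ij} − (5/12 + (i−j)/8)`,
where `g_{ij} = +∞` if `n < 0` and `g_{ij} = (⌊n/7⌋ + n̄)/4` if `n ≥ 0` (`n̄` the least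
nonnegative residue of `n` mod 7).  Then:
(a) `D_{ij} > 7/6` whenever `max(i,j) > 27`;
(b) the only negative entries of `D` are `D_{3,1} = −1/6` and `D_{2,3} = −1/24`.
-/

/-- The lower bound `g_{ij}` for `ord_5 G_{5i−j}` for the polynomial `x⁷ + c·x`. -/
noncomputable def g5 (i j : ℕ) : WithTop ℝ :=
  let n : ℤ := 5 * i - j
  if n < 0 then ⊤
  else (((((n / 7 : ℤ) : ℝ) + ((n % 7 : ℤ) : ℝ)) / 4 : ℝ) : WithTop ℝ)

/-- The defect matrix `D_{ij} = g_{ij} − (5/12 + (i−j)/8)` (subtraction of a real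
constant written as addition of its negative, so `⊤` entries stay `⊤`). -/
noncomputable def D5 (i j : ℕ) : WithTop ℝ :=
  g5 i j + ((-(5 / 12 + ((i : ℝ) - (j : ℝ)) / 8) : ℝ) : WithTop ℝ)

lemma D5_top (i j : ℕ) (h : (5 * (i : ℤ) - j) < 0) : D5 i j = ⊤ := by
  unfold D5 g5
  rw [if_pos h, top_add]

lemma D5_coe (i j : ℕ) (h : ¬ (5 * (i : ℤ) - j) < 0) :
    D5 i j = (((((5 * (i : ℤ) - j) / 7 : ℤ) : ℝ) + (((5 * (i : ℤ) - j) % 7 : ℤ) : ℝ)) / 4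
      + (-(5 / 12 + ((i : ℝ) - (j : ℝ)) / 8)) : ℝ) := by
  unfold D5 g5
  rw [if_neg h, ← WithTop.coe_add]

lemma D5_lower (i j : ℕ) (h : ¬ (5 * (i : ℤ) - j) < 0) (x : ℝ)
    (hx : x < (3 * i + 5 * j) / 56 - 5 / 12) :
    ((x : ℝ) : WithTop ℝ) < D5 i j := by
  rw [D5_coe i j h, WithTop.coe_lt_coe]
  set n : ℤ := 5 * (i : ℤ) - j with hn
  have h1 : 7 * (n / 7) + n % 7 = n := Int.mul_ediv_add_emod n 7
  have h2 : (0 : ℤ) ≤ n % 7 := Int.emod_nonneg n (by norm_num)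
  have h1' : 7 * ((n / 7 : ℤ) : ℝ) + ((n % 7 : ℤ) : ℝ) = (n : ℝ) := by exact_mod_cast h1
  have h2' : (0 : ℝ) ≤ ((n % 7 : ℤ) : ℝ) := by exact_mod_cast h2
  have hnr : (n : ℝ) = 5 * i - j := by push_cast [hn]; ring
  nlinarith [hx, h1', h2']

theorem D5_bounds :
    (∀ i j : ℕ, 1 ≤ i → 1 ≤ j → 27 < max i j →
      ((7 / 6 : ℝ) : WithTop ℝ) < D5 i j) ∧
    D5 3 1 = ((-(1 / 6) : ℝ) : WithTop ℝ) ∧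
    D5 2 3 = ((-(1 / 24) : ℝ) : WithTop ℝ) ∧
    (∀ i j : ℕ, 1 ≤ i → 1 ≤ j → ¬(i = 3 ∧ j = 1) → ¬(i = 2 ∧ j = 3) →
      ((0 : ℝ) : WithTop ℝ) ≤ D5 i j) := by
  refine ⟨?_, ?_, ?_, ?_⟩
  · intro i j hi hj hmax
    by_cases hn : (5 * (i : ℤ) - j) < 0
    · rw [D5_top i j hn]; exact WithTop.coe_lt_top _
    · apply D5_lower i j hn
      have : 28 ≤ i ∨ 28 ≤ j := by
        rcases le_or_gt 28 i with h | h
        · exact Or.inl h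
        · right
          rcases max_cases i j with ⟨he, _⟩ | ⟨he, _⟩ <;> omega
      rcases this with h | h
      · have hi' : (28 : ℝ) ≤ i := by exact_mod_cast h
        have hj' : (1 : ℝ) ≤ j := by exact_mod_cast hj
        linarith
      · have hj' : (28 : ℝ) ≤ j := by exact_mod_cast h
        have hi' : (1 : ℝ) ≤ i := by exact_mod_cast hi
        linarith
  · rw [D5_coe 3 1 (by norm_num)]; norm_num
  · rw [D5_coe 2 3 (by norm_num)]; norm_num
  · intro i j hi hj h31 h23
    by_cases hn : (5 * (i : ℤ) - j) < 0
    · rw [D5_top i j hn]; exact le_top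
    · by_cases hbig : 8 ≤ i ∨ 5 ≤ j
      · apply le_of_lt
        apply D5_lower i j hn
        rcases hbig with h | h
        · have hi' : (8 : ℝ) ≤ i := by exact_mod_cast h
          have hj' : (1 : ℝ) ≤ j := by exact_mod_cast hj
          linarith
        · have hj' : (5 : ℝ) ≤ j := by exact_mod_cast h
          have hi' : (1 : ℝ) ≤ i := by exact_mod_cast hi
          linarith
      · push_neg at hbig
        obtain ⟨hi7, hj4⟩ : i ≤ 7 ∧ j ≤ 4 := ⟨by omega, by omega⟩
        interval_cases i <;> interval_cases j <;>
          simp_all <;> rw [D5_coe _ _ (by norm_num)] <;>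
          simp only [← WithTop.coe_zero, WithTop.coe_le_coe] <;> norm_num
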